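/- The wire test-function g_η is continuous: for every η > 0 with αη < δ/2, the vector field g_η : ℝ³ → ℝ³ defined below is continuous on all of ℝ³; in particular its values from outside the cylinder {|ỹ| = αη} match the rigid-rotation values from inside, both equal to the unit tangential vector (−y₂, y₁, 0)/|ỹ| on the cylinder surface. -/

import Mathlib

open MeasureTheory

noncomputable section

/-- `V3` is the Euclidean space `ℝ³`, modelled as functions `Fin 3 → ℝ`. -/
abbrev V3 := Fin 3 → ℝ

/-- The radial variable `r = |ỹ|` where `ỹ = (y₁, y₂)`. -/
def tr (y : V3) : ℝ := Real.sqrt (y 0 ^ 2 + y 1 ^ 2)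

/-- `ψ_η(r) = αη · log r · ρ(r)`. -/
def psi (α η : ℝ) (ρ : ℝ → ℝ) (r : ℝ) : ℝ := α * η * Real.log r * ρ r

/-- The wire test-function `g_η`: a rigid rotation inside the cylinder `{|ỹ| ≤ αη}`,
and `ψ_η′(r)/r` times `(−y₂, y₁, 0)` outside. -/
def gfun (α η : ℝ) (ρ : ℝ → ℝ) (y : V3) : V3 :=
  if tr y ≤ α * η then (α * η)⁻¹ • ![-(y 1), y 0, 0]
  else (deriv (psi α η ρ) (tr y) / tr y) • ![-(y 1), y 0, 0]

/-- The wire test-function `g_η` is continuous on all of `ℝ³`; on the cylinder surface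
`{|ỹ| = αη}` it equals the unit tangential vector `(−y₂, y₁, 0)/|ỹ|`. -/
theorem gfun_continuous
    (α δ : ℝ) (hα : 0 < α) (hδ : δ ∈ Set.Ioo (0 : ℝ) (1 / 2))
    (ρ : ℝ → ℝ) (hρsmooth : ContDiff ℝ (⊤ : ℕ∞) ρ) (hρmono : AntitoneOn ρ (Set.Ici 0))
    (hρ1 : ∀ r : ℝ, r ≤ δ / 2 → ρ r = 1) (hρ0 : ∀ r : ℝ, δ ≤ r → ρ r = 0)
    (η : ℝ) (hη : 0 < η) (hηδ : α * η < δ / 2) :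
    Continuous (gfun α η ρ) ∧
      ∀ y : V3, tr y = α * η → gfun α η ρ y = (tr y)⁻¹ • ![-(y 1), y 0, 0] := by
  have hc : 0 < α * η := mul_pos hα hη
  -- formula for the derivative of ψ on (0, ∞)
  have hderiv : ∀ r : ℝ, 0 < r →
      deriv (psi α η ρ) r = α * η * r⁻¹ * ρ r + α * η * Real.log r * deriv ρ r := by
    intro r hr
    have h1 : HasDerivAt (fun s => α * η * Real.log s) (α * η * r⁻¹) r :=
      (Real.hasDerivAt_log hr.ne').const_mul (α * η)
    have h2 : HasDerivAt ρ (deriv ρ r) r :=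
      ((hρsmooth.differentiable (by simp)) r).hasDerivAt
    exact (h1.mul h2).deriv
  -- on (0, δ/2) the derivative is αη / r
  have hderiv2 : ∀ r : ℝ, 0 < r → r < δ / 2 → deriv (psi α η ρ) r = α * η * r⁻¹ := by
    intro r hr hr2
    have hev : ρ =ᶠ[nhds r] fun _ => (1 : ℝ) := by
      filter_upwards [Iio_mem_nhds hr2] with s hs
      exact hρ1 s hs.le
    have hd0 : deriv ρ r = 0 := by
      rw [hev.deriv_eq]; simp
    rw [hderiv r hr, hd0, hρ1 r hr2.le]; ring
  -- continuity of deriv ψ / r on (0, ∞)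
  have hcont : ContinuousOn (fun r => deriv (psi α η ρ) r / r) (Set.Ioi 0) := by
    have heq : Set.EqOn (fun r => deriv (psi α η ρ) r / r)
        (fun r => (α * η * r⁻¹ * ρ r + α * η * Real.log r * deriv ρ r) / r)
        (Set.Ioi 0) := fun r hr => by simp only [hderiv r hr]
    apply ContinuousOn.congr _ heq
    apply ContinuousOn.div
    · apply ContinuousOn.add
      · exact (continuousOn_const.mul
          (continuousOn_id.inv₀ fun r hr => ne_of_gt hr)).mul
          hρsmooth.continuous.continuousOn
      · exact (continuousOn_const.mul
          (Real.continuousOn_log.mono fun r hr => ne_of_gt hr)).mul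
          (hρsmooth.continuous_deriv (by simp)).continuousOn
    · exact continuousOn_id
    · exact fun r hr => ne_of_gt hr
  set c := α * η with hcdef
  -- the radial profile F, written so the outer branch is globally continuous
  have hFc : Continuous (fun r : ℝ =>
      if r ≤ c then c⁻¹ else deriv (psi α η ρ) (max r c) / max r c) := by
    apply Continuous.if_le
    · exact continuous_const
    · exact hcont.comp_continuous (continuous_id.max continuous_const)
        fun r => lt_of_lt_of_le hc (le_max_right r c)
    · exact continuous_id
    · exact continuous_const
    · intro r hr
      subst hr
      rw [max_self, hderiv2 c hc hηδ, mul_inv_cancel₀ hc.ne', one_div]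
  -- continuity of the tangential vector field
  have hv : Continuous (fun y : V3 => (![-(y 1), y 0, 0] : V3)) := by
    apply continuous_pi
    intro i
    fin_cases i
    · simp; exact (continuous_apply (1 : Fin 3)).neg
    · simpa using continuous_apply (0 : Fin 3)
    · simpa using (continuous_const : Continuous fun _ : V3 => (0 : ℝ))
  have htr : Continuous tr :=
    Real.continuous_sqrt.comp (((continuous_apply (0 : Fin 3)).pow 2).add
      ((continuous_apply (1 : Fin 3)).pow 2))
  have hgeq : gfun α η ρ = fun y =>
      (if tr y ≤ c then c⁻¹ else deriv (psi α η ρ) (max (tr y) c) / max (tr y) c)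
        • (![-(y 1), y 0, 0] : V3) := by
    funext y
    by_cases h : tr y ≤ c
    · simp [gfun, h, hcdef, h.trans_eq hcdef]
    · simp only [gfun, ← hcdef, if_neg h, max_eq_left (le_of_not_ge h)]
  constructor
  · rw [hgeq]
    exact ((hFc.comp htr).smul hv)
  · intro y hy
    rw [gfun, if_pos hy.le, hy]
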